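/- Let R be a principal ideal domain contained in a ring A such that A is a free R-module of finite rank. If A is a unique factorization domain, then A is a principal ideal domain. -/
import Mathlib

theorem stmt_9 (R A : Type*) [CommRing R] [IsDomain R] [IsPrincipalIdealRing R]
    [CommRing A] [IsDomain A] [Algebra R A]
    (hinj : Function.Injective (algebraMap R A))
    [Module.Free R A] [Module.Finite R A]
    [UniqueFactorizationMonoid A] :
    IsPrincipalIdealRing A := by
  have hint : Algebra.IsIntegral R A := Algebra.IsIntegral.of_finite R A
  apply IsPrincipalIdealRing.of_prime
  intro P hP
  by_cases hbot : P = ⊥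
  · exact hbot ▸ ⟨0, (Ideal.span_zero).symm⟩
  · obtain ⟨p, hpP, hp⟩ := hP.exists_mem_prime_of_ne_bot hbot
    have hsp : (Ideal.span {p} : Ideal A).IsPrime :=
      (Ideal.span_singleton_prime hp.ne_zero).mpr hp
    have hone : (Ideal.span {p} : Ideal A).IsMaximal := by
      apply Ideal.isMaximal_of_isIntegral_of_isMaximal_comap (R := R)
      have hprime : ((Ideal.span {p} : Ideal A).comap (algebraMap R A)).IsPrime :=
        Ideal.IsPrime.comap _
      refine IsPrime.to_maximal_ideal ?_
      exact Ideal.comap_ne_bot_of_integral_mem hp.ne_zero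
        (Ideal.mem_span_singleton_self p) (Algebra.IsIntegral.isIntegral p)
    have : Ideal.span {p} = P :=
      hone.eq_of_le hP.ne_top (Ideal.span_le.mpr (by simpa using hpP))
    exact ⟨p, this.symm⟩
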